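/- Let G be a connected finite graph and L a degree-list assignment (|L(x)| ≥ deg_G(x) for all x). Let g be a proper partial L-coloring of G. If G has no proper total L-coloring f with |f⁻¹(α)| ≥ |g⁻¹(α)| for every color α, then |L(x)| = deg_G(x) for every vertex x. -/

import Mathlib

/-!
Suppose some vertex `x` has `|L(x)| > deg(x)`; we complete any proper partial `L`-coloring
without shrinking a color class, by induction on the sum of `dist(x, v) + 1` over the
uncolored vertices `v`. An uncolored vertex `u` with a color of `L(u)` unused around it simply
receives that color. Otherwise every color of `L(u)` occurs on `N(u)`, so `|L(u)| = deg(u)`,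
hence `u ≠ x`, and the neighbors of `u` carry pairwise distinct colors of `L(u)`. Then the
color of a neighbor `w` of `u` closer to `x` can be moved from `w` to `u`: this keeps the
coloring proper and all class sizes, and moves the uncolored vertex closer to `x`.
-/

open Finset Function

namespace SimpleGraph

theorem Connected.exists_adj_dist_lt {V : Type*} {G : SimpleGraph V} (hconn : G.Connected)
    {u x : V} (hne : u ≠ x) : ∃ w, G.Adj u w ∧ G.dist x w < G.dist x u := by
  obtain ⟨p, hp⟩ := hconn.exists_walk_length_eq_dist u x
  obtain ⟨w, huw, q, rfl⟩ := Walk.exists_eq_cons_of_ne hne p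
  refine ⟨w, huw, ?_⟩
  rw [dist_comm, dist_comm (u := x)]
  have := dist_le q
  rw [Walk.length_cons] at hp
  omega

variable {V C : Type*} {G : SimpleGraph V} {L : V → Finset C} {g : V → Option C} {u w x : V}

/-- `g x = none` means that `x` is uncolored. -/
structure IsProperPartialListColoring (G : SimpleGraph V) (L : V → Finset C)
    (g : V → Option C) : Prop where
  mem_list : ∀ x c, g x = some c → c ∈ L x
  adj_ne : ∀ x y, G.Adj x y → ∀ c, g x = some c → g y ≠ some c

namespace IsProperPartialListColoring

theorem exists_total (hg : G.IsProperPartialListColoring L g) (htotal : ∀ v, g v ≠ none) :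
    ∃ f : V → C, (∀ v, f v ∈ L v) ∧ (∀ a b, G.Adj a b → f a ≠ f b) ∧ some ∘ f = g := by
  choose f hf using fun v => Option.ne_none_iff_exists'.mp (htotal v)
  exact ⟨f, fun v => hg.mem_list v (f v) (hf v),
    fun a b hab h => hg.adj_ne a b hab (f a) (hf a) (h ▸ hf b), funext fun v => (hf v).symm⟩

variable [DecidableEq V]

theorem update_none (hg : G.IsProperPartialListColoring L g) (w : V) :
    G.IsProperPartialListColoring L (update g w none) := by
  have hsome : ∀ v c, update g w none v = some c → g v = some c := by
    intro v c h
    by_cases hv : v = w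
    · simp [hv] at h
    · rwa [update_of_ne hv] at h
  exact ⟨fun v c h => hg.mem_list v c (hsome v c h),
    fun a b hab c ha hb => hg.adj_ne a b hab c (hsome a c ha) (hsome b c hb)⟩

theorem update_of_forall_adj_ne (hg : G.IsProperPartialListColoring L g) {c : C}
    (hc : c ∈ L u) (hfree : ∀ w, G.Adj u w → g w ≠ some c) :
    G.IsProperPartialListColoring L (update g u (some c)) := by
  constructor
  · intro v d h
    by_cases hv : v = u
    · subst hv; simp_all
    · rw [update_of_ne hv] at h; exact hg.mem_list v d h
  · intro a b hab d ha hb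
    by_cases hau : a = u
    · subst hau
      rw [update_self, Option.some_inj] at ha
      subst ha
      rw [update_of_ne hab.ne.symm] at hb
      exact hfree b hab hb
    by_cases hbu : b = u
    · subst hbu
      rw [update_self, Option.some_inj] at hb
      subst hb
      rw [update_of_ne hau] at ha
      exact hfree a hab.symm ha
    rw [update_of_ne hau] at ha
    rw [update_of_ne hbu] at hb
    exact hg.adj_ne a b hab d ha hb

theorem comp_swap (hg : G.IsProperPartialListColoring L g) (hu : g u = none) {β : C}
    (hβ : β ∈ L u) (hw : g w = some β) (huniq : ∀ z, G.Adj u z → g z = some β → z = w) :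
    G.IsProperPartialListColoring L (g ∘ Equiv.swap u w) := by
  have hwu : w ≠ u := by rintro rfl; simp_all
  have hshift : g ∘ Equiv.swap u w = update (update g w none) u (some β) := by
    funext v
    by_cases hvu : v = u
    · simp [hvu, hw]
    by_cases hvw : v = w
    · simp [hvw, hu, hwu]
    simp [Equiv.swap_apply_of_ne_of_ne hvu hvw, hvu, hvw]
  rw [hshift]
  refine (hg.update_none w).update_of_forall_adj_ne hβ fun z hz hzβ => ?_
  by_cases hzw : z = w
  · simp [hzw] at hzβ
  · rw [update_of_ne hzw] at hzβ
    exact hzw (huniq z hz hzβ)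

end IsProperPartialListColoring

section Potential

variable [Fintype V]

noncomputable def uncoloredPotential (G : SimpleGraph V) (x : V) (g : V → Option C) : ℕ :=
  ∑ v ∈ {v | g v = none}, (G.dist x v + 1)

variable [DecidableEq V]

theorem uncoloredPotential_update_lt (hu : g u = none) (c : C) :
    uncoloredPotential G x (update g u (some c)) < uncoloredPotential G x g := by
  refine sum_lt_sum_of_subset (fun v hv => ?_) (i := u) (by simpa using hu) (by simp)
    (Nat.succ_pos _) fun _ _ _ => Nat.zero_le _
  have hvu : v ≠ u := by rintro rfl; simp at hv
  simpa [update_of_ne hvu] using hv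

theorem uncoloredPotential_comp_swap_lt (hu : g u = none) (hw : g w ≠ none)
    (hdist : G.dist x w < G.dist x u) :
    uncoloredPotential G x (g ∘ Equiv.swap u w) < uncoloredPotential G x g := by
  unfold uncoloredPotential
  rw [sum_equiv (Equiv.swap u w) (t := {v | g v = none})
    (g := fun v => G.dist x (Equiv.swap u w v) + 1) (by simp) (by simp)]
  refine sum_lt_sum (fun v hv => ?_) ⟨u, by simpa using hu, by simpa using hdist⟩
  have hvw : v ≠ w := by rintro rfl; simp_all
  by_cases hvu : v = u
  · simp only [hvu, Equiv.swap_apply_left]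
    omega
  · simp [Equiv.swap_apply_of_ne_of_ne hvu hvw]

end Potential

section Domination

variable [Fintype V] [DecidableEq C]

def colorClass (g : V → Option C) (α : C) : Finset V := {x | g x = some α}

def Dominates (f g : V → Option C) : Prop := ∀ α, #(colorClass g α) ≤ #(colorClass f α)

theorem Dominates.trans {f g h : V → Option C} (hfg : Dominates f g) (hgh : Dominates g h) :
    Dominates f h :=
  fun α => (hgh α).trans (hfg α)

theorem dominates_comp_equiv (σ : V ≃ V) : Dominates (g ∘ σ) g :=
  fun α => (card_equiv σ (by simp [colorClass])).ge

theorem dominates_update_of_eq_none [DecidableEq V] (hu : g u = none) (c : C) :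
    Dominates (update g u (some c)) g := by
  intro α
  refine card_le_card fun v hv => ?_
  have hvu : v ≠ u := by rintro rfl; simp_all [colorClass]
  simp_all [colorClass]

end Domination

section Blocked

variable [Fintype V] [DecidableRel G.Adj] [DecidableEq C]

theorem image_some_subset_image_neighborFinset
    (hblocked : ∀ c ∈ L u, ∃ w, G.Adj u w ∧ g w = some c) :
    (L u).image some ⊆ (G.neighborFinset u).image g := by
  intro o ho
  obtain ⟨c, hc, rfl⟩ := mem_image.mp ho
  obtain ⟨w, huw, hw⟩ := hblocked c hc
  exact mem_image.mpr ⟨w, (mem_neighborFinset G u w).mpr huw, hw⟩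

theorem card_le_degree_of_forall_mem_adj_colored
    (hblocked : ∀ c ∈ L u, ∃ w, G.Adj u w ∧ g w = some c) : #(L u) ≤ G.degree u :=
  calc #(L u) = #((L u).image some) := (card_image_of_injective _ (Option.some_injective C)).symm
    _ ≤ #((G.neighborFinset u).image g) :=
      card_le_card (image_some_subset_image_neighborFinset hblocked)
    _ ≤ G.degree u := card_image_le.trans (card_neighborFinset_eq_degree G u).le

theorem exists_color_unique_of_forall_mem_adj_colored
    (hblocked : ∀ c ∈ L u, ∃ w, G.Adj u w ∧ g w = some c) (hL : G.degree u ≤ #(L u))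
    (huw : G.Adj u w) :
    ∃ β ∈ L u, g w = some β ∧ ∀ z, G.Adj u z → g z = some β → z = w := by
  have hsub := image_some_subset_image_neighborFinset hblocked
  have hdeg : #(G.neighborFinset u) ≤ #((L u).image some) :=
    calc #(G.neighborFinset u) = G.degree u := card_neighborFinset_eq_degree G u
      _ ≤ #(L u) := hL
      _ = #((L u).image some) := (card_image_of_injective _ (Option.some_injective C)).symm
  have himage : (G.neighborFinset u).image g = (L u).image some :=
    (eq_of_subset_of_card_le hsub (card_image_le.trans hdeg)).symm
  have hinj : Set.InjOn g (G.neighborFinset u) :=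
    card_image_iff.mp (le_antisymm card_image_le (himage ▸ hdeg))
  have hw : g w ∈ (L u).image some :=
    himage ▸ mem_image_of_mem g ((mem_neighborFinset G u w).mpr huw)
  obtain ⟨β, hβ, hgw⟩ := mem_image.mp hw
  exact ⟨β, hβ, hgw.symm, fun z huz hz => hinj (by simpa using huz) (by simpa using huw)
    (hz.trans hgw)⟩

end Blocked

variable [Fintype V] [DecidableEq V] [DecidableRel G.Adj] [DecidableEq C]

theorem exists_dominating_listColoring_of_degree_lt (hconn : G.Connected)
    (hL : ∀ v, G.degree v ≤ #(L v)) (hx : G.degree x < #(L x))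
    (hg : G.IsProperPartialListColoring L g) :
    ∃ f : V → C, (∀ v, f v ∈ L v) ∧ (∀ a b, G.Adj a b → f a ≠ f b) ∧
      Dominates (some ∘ f) g := by
  induction hn : uncoloredPotential G x g using Nat.strong_induction_on generalizing g with
  | _ n ih =>
  by_cases htotal : ∀ v, g v ≠ none
  · obtain ⟨f, hfL, hfadj, rfl⟩ := hg.exists_total htotal
    exact ⟨f, hfL, hfadj, fun _ => le_rfl⟩
  push Not at htotal
  obtain ⟨u, hu⟩ := htotal
  have recurse : ∀ g', G.IsProperPartialListColoring L g' →
      uncoloredPotential G x g' < uncoloredPotential G x g → Dominates g' g →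
      ∃ f : V → C, (∀ v, f v ∈ L v) ∧ (∀ a b, G.Adj a b → f a ≠ f b) ∧
        Dominates (some ∘ f) g := by
    intro g' hg' hlt hdom
    obtain ⟨f, hfL, hfadj, hf⟩ := ih _ (hn ▸ hlt) hg' rfl
    exact ⟨f, hfL, hfadj, hf.trans hdom⟩
  by_cases hfree : ∃ c ∈ L u, ∀ w, G.Adj u w → g w ≠ some c
  · obtain ⟨c, hc, hfree⟩ := hfree
    exact recurse _ (hg.update_of_forall_adj_ne hc hfree) (uncoloredPotential_update_lt hu c)
      (dominates_update_of_eq_none hu c)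
  push Not at hfree
  have hux : u ≠ x := by
    rintro rfl
    exact (card_le_degree_of_forall_mem_adj_colored hfree).not_gt hx
  obtain ⟨w, huw, hdist⟩ := hconn.exists_adj_dist_lt hux
  obtain ⟨β, hβ, hw, huniq⟩ := exists_color_unique_of_forall_mem_adj_colored hfree (hL u) huw
  exact recurse _ (hg.comp_swap hu hβ hw huniq)
    (uncoloredPotential_comp_swap_lt hu (by simp [hw]) hdist) (dominates_comp_equiv _)

end SimpleGraph

/-- Let G be a connected finite graph, L a degree-list assignment, g a proper
partial L-coloring. If G has no proper total L-coloring dominating g, then |L(x)| = deg(x)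
for every vertex x. -/
theorem stmt_10 {V C : Type*} [Fintype V] [DecidableEq V] [DecidableEq C]
    (G : SimpleGraph V) [DecidableRel G.Adj] (hconn : G.Connected)
    (L : V → Finset C) (hL : ∀ x, G.degree x ≤ (L x).card)
    (g : V → Option C)
    (hgL : ∀ x c, g x = some c → c ∈ L x)
    (hgproper : ∀ x y, G.Adj x y → ∀ c : C, g x = some c → g y ≠ some c)
    (hno : ¬ ∃ f : V → C,
      (∀ x, f x ∈ L x) ∧
      (∀ x y, G.Adj x y → f x ≠ f y) ∧
      (∀ α : C, (Finset.univ.filter fun x => g x = some α).card ≤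
        (Finset.univ.filter fun x => f x = α).card)) :
    ∀ x, (L x).card = G.degree x := by
  intro x
  by_contra hx
  obtain ⟨f, hfL, hfadj, hdom⟩ :=
    G.exists_dominating_listColoring_of_degree_lt hconn hL ((hL x).lt_of_ne' hx) ⟨hgL, hgproper⟩
  exact hno ⟨f, hfL, hfadj, fun α => by simpa [SimpleGraph.colorClass] using hdom α⟩
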